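/- Suppose the Runge–Kutta coefficients satisfy the symplectic condition b_i a_{ij} + b_j a_{ji} = b_i b_j for all i, j ∈ {1,…,s}, and that Q = U². Then one step of Scheme 2.2 conserves the discrete Hamiltonian energy H_h(U) = (κ/2)⟨U,U⟩_h + (b/2)⟨D₂U, U⟩_h + (β/3)⟨U, U²⟩_h; that is, H_h(U⁺) = H_h(U). -/
import Mathlib


open Matrix BigOperators

section Aux

lemma skew_dot {n : ℕ} (M : Matrix (Fin n) (Fin n) ℝ) (hM : Mᵀ = -M) (v : Fin n → ℝ) :
    v ⬝ᵥ M.mulVec v = 0 := by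
  have h1 : v ⬝ᵥ M.mulVec v = M.vecMul v ⬝ᵥ v := Matrix.dotProduct_mulVec v M v
  have h2 : M.vecMul v = -(M.mulVec v) := by
    rw [← Matrix.mulVec_transpose, hM, Matrix.neg_mulVec]
  rw [h2, neg_dotProduct, dotProduct_comm (M.mulVec v) v] at h1
  linarith

/-- Energy bilinear form for Scheme 2.2. -/
noncomputable def B1aux (N : ℕ) (κ b β : ℝ) (D2 : Matrix (Fin N) (Fin N) ℝ) :
    ((Fin N → ℝ) × (Fin N → ℝ)) →ₗ[ℝ] ((Fin N → ℝ) × (Fin N → ℝ)) →ₗ[ℝ] ℝ :=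
  LinearMap.mk₂ ℝ
    (fun z w => κ * (z.1 ⬝ᵥ w.1) + b * (D2.mulVec z.1 ⬝ᵥ w.1)
      + β / 3 * (z.1 ⬝ᵥ w.2 + w.1 ⬝ᵥ z.2))
    (by
      intro m m' n
      simp only [Prod.fst_add, Prod.snd_add, add_dotProduct, dotProduct_add,
        Matrix.mulVec_add]
      ring)
    (by
      intro c m n
      simp only [Prod.smul_fst, Prod.smul_snd, smul_dotProduct, dotProduct_smul,
        Matrix.mulVec_smul, smul_eq_mul]
      ring)
    (by
      intro m n n'
      simp only [Prod.fst_add, Prod.snd_add, add_dotProduct, dotProduct_add,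
        Matrix.mulVec_add]
      ring)
    (by
      intro c m n
      simp only [Prod.smul_fst, Prod.smul_snd, smul_dotProduct, dotProduct_smul,
        Matrix.mulVec_smul, smul_eq_mul]
      ring)

/-- Per-component form used to propagate `Q = U²`. -/
noncomputable def B2aux : (ℝ × ℝ) →ₗ[ℝ] (ℝ × ℝ) →ₗ[ℝ] ℝ :=
  LinearMap.mk₂ ℝ (fun z w => -(z.1 * w.1))
    (by intro m m' n; simp; ring)
    (by intro c m n; simp; ring)
    (by intro m n n'; simp; ring)
    (by intro c m n; simp; ring)

end Aux

/-- Symplectic RK methods conserve (inhomogeneous) quadratic invariants. -/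
lemma rk_quad_invariant {M : Type*} [AddCommGroup M] [Module ℝ M]
    (B : M →ₗ[ℝ] M →ₗ[ℝ] ℝ) (hBsymm : ∀ x y, B x y = B y x)
    (c : M →ₗ[ℝ] ℝ)
    (s : ℕ) (τ : ℝ) (a : Fin s → Fin s → ℝ) (bw : Fin s → ℝ)
    (hsymp : ∀ i j, bw i * a i j + bw j * a j i = bw i * bw j)
    (z zplus : M) (k zst : Fin s → M)
    (hzst : ∀ i, zst i = z + τ • ∑ j, a i j • k j)
    (hstage : ∀ i, 2 * B (zst i) (k i) + c (k i) = 0)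
    (hzplus : zplus = z + τ • ∑ i, bw i • k i) :
    B zplus zplus + c zplus = B z z + c z := by
  subst hzplus
  set S : M := ∑ i, bw i • k i with hS
  set P : ℝ := ∑ i, bw i * B (zst i) (k i) with hP
  set Cc : ℝ := ∑ i, bw i * c (k i) with hCc
  set Dd : ℝ := ∑ i, ∑ j, bw i * a i j * B (k j) (k i) with hDd
  have hBzS : B z S = ∑ i, bw i * B z (k i) := by
    simp [hS, map_sum, _root_.map_smul, smul_eq_mul]
  have hBSz : B S z = B z S := hBsymm _ _
  have hBSS : B S S = ∑ i, ∑ j, bw i * bw j * B (k i) (k j) := by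
    simp only [hS, map_sum, _root_.map_smul, LinearMap.sum_apply, LinearMap.smul_apply,
      smul_eq_mul, Finset.mul_sum]
    exact Finset.sum_congr rfl fun i _ => Finset.sum_congr rfl fun j _ => by
      rw [hBsymm (k j) (k i)]; ring
  have hz4 : ∀ i, B z (k i) = B (zst i) (k i) - τ * ∑ j, a i j * B (k j) (k i) := by
    intro i
    have hz : z = zst i - τ • ∑ j, a i j • k j := by rw [hzst i]; abel
    rw [hz]
    simp only [map_sub, LinearMap.sub_apply, _root_.map_smul, LinearMap.smul_apply,
      map_sum, LinearMap.sum_apply, smul_eq_mul, Finset.mul_sum]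
  have f1 : B z S = P - τ * Dd := by
    rw [hBzS, hP, hDd]
    have hpt : ∀ i, bw i * B z (k i)
        = bw i * B (zst i) (k i) - τ * ∑ j, bw i * a i j * B (k j) (k i) := by
      intro i
      rw [hz4 i, mul_sub]
      congr 1
      simp only [Finset.mul_sum]
      exact Finset.sum_congr rfl fun j _ => by ring
    rw [Finset.sum_congr rfl fun i _ => hpt i, Finset.sum_sub_distrib, ← Finset.mul_sum]
  have f4 : ∑ i, ∑ j, bw i * bw j * B (k i) (k j) = 2 * Dd := by
    have step : ∀ i j, bw i * bw j * B (k i) (k j)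
        = bw i * a i j * B (k j) (k i) + bw j * a j i * B (k j) (k i) := by
      intro i j
      rw [hBsymm (k i) (k j), ← add_mul, hsymp i j]
    rw [Finset.sum_congr rfl fun i (_ : i ∈ Finset.univ) =>
      Finset.sum_congr rfl fun j (_ : j ∈ Finset.univ) => step i j]
    rw [Finset.sum_congr rfl fun i (_ : i ∈ Finset.univ) =>
      (Finset.sum_add_distrib (f := fun j => bw i * a i j * B (k j) (k i))
        (g := fun j => bw j * a j i * B (k j) (k i))),
      Finset.sum_add_distrib]
    rw [hDd, two_mul]
    congr 1
    rw [Finset.sum_comm]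
    exact Finset.sum_congr rfl fun i _ => Finset.sum_congr rfl fun j _ => by
      rw [hBsymm (k i) (k j)]
  have f5 : 2 * P + Cc = 0 := by
    rw [hP, hCc, Finset.mul_sum, ← Finset.sum_add_distrib]
    calc ∑ i, (2 * (bw i * B (zst i) (k i)) + bw i * c (k i))
        = ∑ i, bw i * (2 * B (zst i) (k i) + c (k i)) :=
          Finset.sum_congr rfl fun i _ => by ring
      _ = 0 := by simp [hstage]
  have hcS : c S = Cc := by
    simp [hS, hCc, map_sum, _root_.map_smul, smul_eq_mul]
  have expand : B (z + τ • S) (z + τ • S) + c (z + τ • S)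
      = B z z + c z + τ * (2 * B z S + c S) + τ ^ 2 * B S S := by
    simp only [map_add, _root_.map_smul, LinearMap.add_apply, LinearMap.smul_apply,
      smul_eq_mul]
    rw [hBSz]
    ring
  rw [expand, f1, hcS, hBSS, f4]
  linear_combination τ * f5

/-- Under the symplectic condition and the consistent initialization
`Q = U²`, one step of Scheme 2.2 conserves the discrete Hamiltonian energy
`H_h(U) = (κ/2)⟨U,U⟩_h + (b/2)⟨D₂U,U⟩_h + (β/3)⟨U,U²⟩_h`. -/
theorem scheme22_hamiltonian_energy_conservation
    (N : ℕ) (hN : 1 ≤ N) (h τ : ℝ) (hh : 0 < h)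
    (κ δ b α β : ℝ)
    (D1 D2 D4 : Matrix (Fin N) (Fin N) ℝ)
    (hD1 : D1ᵀ = -D1) (hD2 : D2ᵀ = D2) (hD4 : D4ᵀ = D4)
    (Ah : Matrix (Fin N) (Fin N) ℝ) (hAh : Ah = 1 - δ • D2 + α • D4)
    (hAhinv : IsUnit Ah)
    (hcomm2 : D1 * D2 = D2 * D1) (hcomm4 : D1 * D4 = D4 * D1)
    (Jh : Matrix (Fin N) (Fin N) ℝ) (hJh : Jh = -(Ah⁻¹ * D1))
    (s : ℕ) (hs : 1 ≤ s) (a : Fin s → Fin s → ℝ) (bw : Fin s → ℝ)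
    (hsymp : ∀ i j, bw i * a i j + bw j * a j i = bw i * bw j)
    (U Q Uplus Qplus : Fin N → ℝ) (K L Ust Qst : Fin s → Fin N → ℝ)
    (hQ0 : ∀ j, Q j = (U j) ^ 2)
    (hK : ∀ i, K i = Jh.mulVec
      (κ • Ust i + b • D2.mulVec (Ust i)
        + (β / 3) • (Qst i + 2 • fun j => (Ust i j) ^ 2)))
    (hUst : ∀ i, Ust i = U + τ • ∑ j, a i j • K j)
    (hQst : ∀ i, Qst i = Q + τ • ∑ j, a i j • L j)
    (hL : ∀ i, L i = 2 • fun j => Ust i j * K i j)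
    (hUplus : Uplus = U + τ • ∑ i, bw i • K i)
    (hQplus : Qplus = Q + τ • ∑ i, bw i • L i) :
    (κ / 2) * (h * ∑ j, Uplus j * Uplus j)
        + (b / 2) * (h * ∑ j, D2.mulVec Uplus j * Uplus j)
        + (β / 3) * (h * ∑ j, Uplus j * (Uplus j) ^ 2)
      = (κ / 2) * (h * ∑ j, U j * U j)
        + (b / 2) * (h * ∑ j, D2.mulVec U j * U j)
        + (β / 3) * (h * ∑ j, U j * (U j) ^ 2) := by
  -- Jh is skew-symmetric
  have hAhT : Ahᵀ = Ah := by
    rw [hAh]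
    simp [Matrix.transpose_add, Matrix.transpose_sub, Matrix.transpose_smul, hD2, hD4]
  have hdet : IsUnit Ah.det := (Matrix.isUnit_iff_isUnit_det Ah).mp hAhinv
  have hAhD1 : Ah * D1 = D1 * Ah := by
    rw [hAh]
    simp only [Matrix.add_mul, Matrix.sub_mul, Matrix.mul_add, Matrix.mul_sub,
      Matrix.smul_mul, Matrix.mul_smul, Matrix.one_mul, Matrix.mul_one, hcomm2, hcomm4]
  have hinvD1 : Ah⁻¹ * D1 = D1 * Ah⁻¹ := by
    calc Ah⁻¹ * D1 = Ah⁻¹ * D1 * (Ah * Ah⁻¹) := by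
          rw [Matrix.mul_nonsing_inv _ hdet, Matrix.mul_one]
      _ = Ah⁻¹ * (D1 * Ah) * Ah⁻¹ := by simp only [Matrix.mul_assoc]
      _ = Ah⁻¹ * (Ah * D1) * Ah⁻¹ := by rw [hAhD1]
      _ = (Ah⁻¹ * Ah) * D1 * Ah⁻¹ := by simp only [Matrix.mul_assoc]
      _ = D1 * Ah⁻¹ := by rw [Matrix.nonsing_inv_mul _ hdet, Matrix.one_mul]
  have hJhT : Jhᵀ = -Jh := by
    rw [hJh, Matrix.transpose_neg, Matrix.transpose_mul, hD1,
      Matrix.transpose_nonsing_inv, hAhT]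
    rw [Matrix.neg_mul, hinvD1, neg_neg]
  have hskew : ∀ v : Fin N → ℝ, v ⬝ᵥ Jh.mulVec v = 0 := fun v => skew_dot Jh hJhT v
  -- symmetry of the bilinear form
  have hD2sym : ∀ u v : Fin N → ℝ, D2.mulVec u ⬝ᵥ v = D2.mulVec v ⬝ᵥ u := by
    intro u v
    calc D2.mulVec u ⬝ᵥ v = v ⬝ᵥ D2.mulVec u := dotProduct_comm _ _
      _ = v ᵥ* D2 ⬝ᵥ u := Matrix.dotProduct_mulVec _ _ _
      _ = D2.mulVec v ⬝ᵥ u := by rw [← Matrix.mulVec_transpose, hD2]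
  have hB1symm : ∀ x y, B1aux N κ b β D2 x y = B1aux N κ b β D2 y x := by
    intro x y
    simp only [B1aux, LinearMap.mk₂_apply]
    rw [dotProduct_comm x.1 y.1, hD2sym x.1 y.1]
    ring
  -- stage vectors and stage identity for the energy form
  set g : Fin s → Fin N → ℝ := fun i =>
    κ • Ust i + b • D2.mulVec (Ust i) + (β / 3) • (Qst i + 2 • fun j => (Ust i j) ^ 2)
    with hg
  have hstage1 : ∀ i, 2 * B1aux N κ b β D2 ((fun i => (Ust i, Qst i)) i)
      ((fun i => (K i, L i)) i) + (0 : ((Fin N → ℝ) × (Fin N → ℝ)) →ₗ[ℝ] ℝ)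
      ((fun i => (K i, L i)) i) = 0 := by
    intro i
    have hgK : g i ⬝ᵥ K i = 0 := by
      rw [hK i]; exact hskew _
    have hform : B1aux N κ b β D2 (Ust i, Qst i) (K i, L i) = g i ⬝ᵥ K i := by
      simp only [B1aux, LinearMap.mk₂_apply, dotProduct, hg, Pi.add_apply,
        Pi.smul_apply, smul_eq_mul, hL i, Finset.mul_sum, nsmul_eq_mul, Nat.cast_ofNat,
        Pi.mul_apply, Pi.ofNat_apply, Pi.natCast_apply,
        ← Finset.sum_add_distrib]
      exact Finset.sum_congr rfl fun j _ => by ring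
    simp only [LinearMap.zero_apply, add_zero, hform, hgK, mul_zero]
  have hzst1 : ∀ i, (fun i => (Ust i, Qst i)) i
      = (U, Q) + τ • ∑ j, a i j • (fun i => (K i, L i)) j := by
    intro i
    have h1 : Ust i = U + τ • ∑ j, a i j • K j := hUst i
    have h2 : Qst i = Q + τ • ∑ j, a i j • L j := hQst i
    refine Prod.ext ?_ ?_ <;>
      simp [h1, h2, Prod.fst_sum, Prod.snd_sum]
  have hzplus1 : ((Uplus, Qplus) : (Fin N → ℝ) × (Fin N → ℝ))
      = (U, Q) + τ • ∑ i, bw i • (fun i => (K i, L i)) i := by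
    refine Prod.ext ?_ ?_ <;>
      simp [hUplus, hQplus, Prod.fst_sum, Prod.snd_sum]
  have E1 := rk_quad_invariant (B1aux N κ b β D2) hB1symm 0 s τ a bw hsymp
    (U, Q) (Uplus, Qplus) (fun i => (K i, L i)) (fun i => (Ust i, Qst i))
    hzst1 hstage1 hzplus1
  simp only [B1aux, LinearMap.mk₂_apply, LinearMap.zero_apply, add_zero] at E1
  -- componentwise: Qplus = Uplus ^ 2
  have hQp : ∀ j, Qplus j = (Uplus j) ^ 2 := by
    intro j
    have hB2symm : ∀ x y, B2aux x y = B2aux y x := by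
      intro x y; simp only [B2aux, LinearMap.mk₂_apply]; ring
    have hstage2 : ∀ i, 2 * B2aux ((fun i => (Ust i j, Qst i j)) i)
        ((fun i => (K i j, L i j)) i)
        + (LinearMap.snd ℝ ℝ ℝ) ((fun i => (K i j, L i j)) i) = 0 := by
      intro i
      have hLij : L i j = 2 * (Ust i j * K i j) := by
        rw [hL i]; simp [nsmul_eq_mul]
      simp only [B2aux, LinearMap.mk₂_apply, LinearMap.snd_apply, hLij]
      ring
    have hzst2 : ∀ i, (fun i => (Ust i j, Qst i j)) i
        = (U j, Q j) + τ • ∑ jj, a i jj • (fun i => (K i j, L i j)) jj := by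
      intro i
      have h1 := congrFun (hUst i) j
      have h2 := congrFun (hQst i) j
      simp only [Pi.add_apply, Pi.smul_apply, Finset.sum_apply, smul_eq_mul] at h1 h2
      refine Prod.ext ?_ ?_ <;> simp [h1, h2, Prod.fst_sum, Prod.snd_sum]
    have hzplus2 : ((Uplus j, Qplus j) : ℝ × ℝ)
        = (U j, Q j) + τ • ∑ i, bw i • (fun i => (K i j, L i j)) i := by
      have h1 := congrFun hUplus j
      have h2 := congrFun hQplus j
      simp only [Pi.add_apply, Pi.smul_apply, Finset.sum_apply, smul_eq_mul] at h1 h2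
      refine Prod.ext ?_ ?_ <;> simp [h1, h2, Prod.fst_sum, Prod.snd_sum]
    have E2 := rk_quad_invariant B2aux hB2symm (LinearMap.snd ℝ ℝ ℝ) s τ a bw hsymp
      (U j, Q j) (Uplus j, Qplus j) (fun i => (K i j, L i j)) (fun i => (Ust i j, Qst i j))
      hzst2 hstage2 hzplus2
    simp only [B2aux, LinearMap.mk₂_apply, LinearMap.snd_apply] at E2
    linear_combination E2 + hQ0 j
  -- assemble
  have g1 : ∑ j, Uplus j * (Uplus j) ^ 2 = ∑ j, Uplus j * Qplus j :=
    Finset.sum_congr rfl fun j _ => by rw [hQp j]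
  have g2 : ∑ j, U j * (U j) ^ 2 = ∑ j, U j * Q j :=
    Finset.sum_congr rfl fun j _ => by rw [hQ0 j]
  simp only [dotProduct] at E1
  rw [g1, g2]
  linear_combination (h / 2) * E1
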